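/- Let v₁,…,v_N be independent uniform in {0,1}^n. The probability that all N templates lie within a common Hamming ε-ball satisfies V_ε^{N-1} ≤ P(∃ t : ∀ i, d_H(t, v_i) ≤ ε) ≤ V_{2ε}^{N-1}, where V_r is the normalized Hamming ball volume of radius r. -/

import Mathlib

/-!
Anchor everything at the first template `f 0`. If all templates lie within `ε` of `f 0`, then
`f 0` is a master template; conversely, a master template puts every template within `2ε` of
`f 0` by the triangle inequality. Given `f 0`, the remaining `N - 1` templates fall independently
into the Hamming ball of radius `r` about it, whose volume does not depend on the centre, so the
anchored event has probability exactly `V_r ^ (N - 1)`.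
-/

open Finset

/-- Normalized volume of a Hamming ball of radius `r` in `{0,1}^n`. -/
noncomputable def Vball (n r : ℕ) : ℝ :=
  (∑ k ∈ Finset.range (r + 1), (n.choose k : ℝ)) / 2 ^ n

theorem card_filter_forall_rel_head {α : Type*} [Fintype α] [DecidableEq α]
    {R : α → α → Prop} [DecidableRel R] (hR : ∀ x, R x x) (m : ℕ) :
    #{f : Fin (m + 1) → α | ∀ i, R (f 0) (f i)} = ∑ x, #{y | R x y} ^ m := by
  -- split `f` into its head and tail; by reflexivity the condition at `i = 0` is vacuous
  rw [card_equiv (Fin.consEquiv fun _ ↦ α).symm (t := {p : α × (Fin m → α) | ∀ i, R p.1 (p.2 i)})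
    (fun f ↦ by simp [Fin.forall_fin_succ, hR, Fin.tail])]
  rw [card_filter, Fintype.sum_prod_type]
  refine sum_congr rfl fun x _ ↦ ?_
  rw [← card_filter, ← Fintype.card_piFinset_const]
  congr 1
  ext g
  simp

section Hamming

variable {ι : Type*} [Fintype ι] [DecidableEq ι]

theorem card_hammingDist_eq (x : ι → Bool) (k : ℕ) :
    #{y | hammingDist x y = k} = (Fintype.card ι).choose k := by
  have flip_ne (a b : Bool) : a ≠ (a ^^ b) ↔ b = true := by cases a <;> cases b <;> decide
  rw [← card_univ, ← card_powersetCard]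
  refine card_nbij' (fun y ↦ ({j | x j ≠ y j} : Finset ι))
    (fun s j ↦ xor (x j) (decide (j ∈ s))) ?_ ?_ ?_ ?_
  · intro y hy
    simpa [mem_powersetCard_univ, hammingDist] using hy
  · intro s hs
    simpa [hammingDist, flip_ne] using hs
  · intro y _
    funext j
    simp only [ne_eq, mem_filter, mem_univ, true_and]
    cases x j <;> cases y j <;> decide
  · intro s _
    ext j
    simp [flip_ne]

theorem card_hammingDist_le (x : ι → Bool) (r : ℕ) :
    #{y | hammingDist x y ≤ r} = ∑ k ∈ range (r + 1), (Fintype.card ι).choose k := by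
  rw [card_eq_sum_card_fiberwise (f := hammingDist x) (t := range (r + 1))
    (fun y hy ↦ mem_range_succ_iff.2 (mem_filter.1 hy).2)]
  refine sum_congr rfl fun k hk ↦ ?_
  rw [filter_filter, ← card_hammingDist_eq x k]
  congr 1
  ext y
  simp only [mem_filter, mem_univ, true_and, and_iff_right_iff_imp]
  rintro rfl
  exact mem_range_succ_iff.1 hk

theorem card_hammingDist_head_le_div_card (r m : ℕ) :
    (#{f : Fin (m + 1) → ι → Bool | ∀ i, hammingDist (f 0) (f i) ≤ r} : ℝ) /
      Fintype.card (Fin (m + 1) → ι → Bool) = Vball (Fintype.card ι) r ^ m := by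
  rw [card_filter_forall_rel_head (R := fun x y ↦ hammingDist x y ≤ r) (fun x ↦ by simp) m]
  simp only [card_hammingDist_le, sum_const, card_univ, Fintype.card_fun, Fintype.card_bool,
    Fintype.card_fin, smul_eq_mul, Vball]
  push_cast
  rw [div_pow, pow_succ]
  field_simp

end Hamming

/-- Bounds on the probability that `N` independent uniform templates in `{0,1}^n`
all lie within a common Hamming `ε`-ball, i.e. that an `(N,ε)`-master template exists. -/
theorem master_template_prob_bounds (n N ε : ℕ) :
    Vball n ε ^ (N - 1) ≤
      ((univ.filter (fun f : Fin N → (Fin n → Bool) =>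
          ∃ t : Fin n → Bool, ∀ i, hammingDist t (f i) ≤ ε)).card : ℝ) /
        (Fintype.card (Fin N → Fin n → Bool) : ℝ) ∧
    ((univ.filter (fun f : Fin N → (Fin n → Bool) =>
        ∃ t : Fin n → Bool, ∀ i, hammingDist t (f i) ≤ ε)).card : ℝ) /
      (Fintype.card (Fin N → Fin n → Bool) : ℝ) ≤
    Vball n (2 * ε) ^ (N - 1) := by
  cases N with
  | zero => simp [filter_true_of_mem]
  | succ m =>
    have prob_eq (r : ℕ) := Fintype.card_fin n ▸ card_hammingDist_head_le_div_card (ι := Fin n) r m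
    rw [Nat.add_sub_cancel, ← prob_eq, ← prob_eq]
    refine ⟨?_, ?_⟩ <;> gcongr ?_ / _ <;> refine Nat.cast_le.2 (card_le_card fun f hf ↦ ?_) <;>
      simp only [mem_filter, mem_univ, true_and] at hf ⊢
    · exact ⟨f 0, hf⟩
    · obtain ⟨t, ht⟩ := hf
      exact fun i ↦ (hammingDist_triangle_left (f 0) (f i) t).trans (by linarith [ht 0, ht i])
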